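/- Let X, Y ∈ ℍ^{M×N} admit QSVDs with singular values x : Fin (min M N) → ℝ and y : Fin (min M N) → ℝ respectively. Then Re(tr(Yᴴ * X)) ≤ Σ_{i=1}^{min(M,N)} (x i)·(y i), where tr denotes the quaternion trace and Re the real part of a quaternion (the quaternionic von Neumann trace inequality). -/

import Mathlib

noncomputable section

open Matrix

abbrev ℍ : Type := Quaternion ℝ

/-- The `M × N` rectangular diagonal quaternion matrix of `σ : Fin K → ℝ`:
entry `(i, j)` is `σ i` when `i` and `j` have equal numerical index (below `K`), else `0`. -/
def rectDiag (M N : ℕ) {K : ℕ} (σ : Fin K → ℝ) : Matrix (Fin M) (Fin N) ℍ :=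
  Matrix.of fun i j =>
    if h : (i : ℕ) = (j : ℕ) ∧ (i : ℕ) < K then ((σ ⟨i, h.2⟩ : ℝ) : ℍ) else 0

/-- A square quaternion matrix is unitary if `A * Aᴴ = Aᴴ * A = 1`. -/
def IsUnitary {n : ℕ} (A : Matrix (Fin n) (Fin n) ℍ) : Prop :=
  A * Aᴴ = 1 ∧ Aᴴ * A = 1

/-- `IsQSVD A U σ V` : `A = U * D * Vᴴ` is a quaternion singular value decomposition of `A`,
with `U`, `V` unitary and `σ` a nonincreasing nonnegative family of singular values. -/
def IsQSVD {M N : ℕ} (A : Matrix (Fin M) (Fin N) ℍ)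
    (U : Matrix (Fin M) (Fin M) ℍ) (σ : Fin (min M N) → ℝ)
    (V : Matrix (Fin N) (Fin N) ℍ) : Prop :=
  IsUnitary U ∧ IsUnitary V ∧ Antitone σ ∧ (∀ i, 0 ≤ σ i) ∧
    A = U * rectDiag M N σ * Vᴴ

/-- `A` admits a QSVD with singular values `σ`. -/
def HasQSVD {M N : ℕ} (A : Matrix (Fin M) (Fin N) ℍ) (σ : Fin (min M N) → ℝ) : Prop :=
  ∃ U V, IsQSVD A U σ V

open Finset

/-!
Write `X = U Dₓ Vᴴ` and `Y = P D_y Qᴴ`. Since `Re (a b) = Re (b a)` in `ℍ`, `Re ∘ tr` is cyclic,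
so `Re tr (Yᴴ X) = Re tr (D_yᴴ A Dₓ B)` with `A = Pᴴ U` and `B = Vᴴ Q` unitary, and this equals
`∑ₖ ∑ₗ yₖ xₗ Re (Aₖₗ Bₗₖ)`. The bound `Re (a b) ≤ (|a|² + |b|²) / 2` turns it into the mean of
two forms `yᵀ S x`, where `S` is a square block of one of the doubly stochastic matrices
`(|Aᵢⱼ|²)` and `(|Bⱼᵢ|²)`, hence doubly substochastic. Finally `yᵀ S x ≤ xᵀ y` for such `S` and
nonincreasing nonnegative `x`, `y`: both sides are bilinear, `x` and `y` are nonnegative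
combinations of indicators of initial segments `{0, …, k}`, and for these indicators the claim
`∑_{i ≤ l, j ≤ k} Sᵢⱼ ≤ min l k + 1` follows from the row sums or from the column sums of `S`.
-/

lemma sum_sum_le_card_of_sum_row_le_one {ι κ : Type*} [Fintype κ] {S : ι → κ → ℝ}
    (hS : ∀ i j, 0 ≤ S i j) (hrow : ∀ i, ∑ j, S i j ≤ 1) (s : Finset ι) (t : Finset κ) :
    ∑ i ∈ s, ∑ j ∈ t, S i j ≤ #s := by
  calc ∑ i ∈ s, ∑ j ∈ t, S i j ≤ ∑ _i ∈ s, (1 : ℝ) := by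
        gcongr with i
        exact (sum_le_univ_sum_of_nonneg (hS i)).trans (hrow i)
    _ = #s := by simp

lemma sum_sum_le_card_of_sum_col_le_one {ι κ : Type*} [Fintype ι] {S : ι → κ → ℝ}
    (hS : ∀ i j, 0 ≤ S i j) (hcol : ∀ j, ∑ i, S i j ≤ 1) (s : Finset ι) (t : Finset κ) :
    ∑ i ∈ s, ∑ j ∈ t, S i j ≤ #t := by
  rw [sum_comm]
  exact sum_sum_le_card_of_sum_row_le_one (fun j i => hS i j) hcol t s

def Fin.iicIndicator {K : ℕ} (k : Fin K) : Fin K → ℝ := fun j => if j ≤ k then 1 else 0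

lemma Fin.iicIndicator_dotProduct_mulVec_le {K : ℕ} {S : Matrix (Fin K) (Fin K) ℝ}
    (hS : ∀ i j, 0 ≤ S i j) (hrow : ∀ i, ∑ j, S i j ≤ 1) (hcol : ∀ j, ∑ i, S i j ≤ 1)
    (l k : Fin K) : iicIndicator l ⬝ᵥ S *ᵥ iicIndicator k ≤ iicIndicator k ⬝ᵥ iicIndicator l := by
  have hbox : iicIndicator l ⬝ᵥ S *ᵥ iicIndicator k = ∑ i ∈ Iic l, ∑ j ∈ Iic k, S i j := by
    simp [iicIndicator, dotProduct, mulVec, ← sum_filter, filter_ge_eq_Iic]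
  have hmeet : iicIndicator k ⬝ᵥ iicIndicator l = #(Iic l ∩ Iic k) := by
    simp [iicIndicator, dotProduct, ← sum_filter, filter_ge_eq_Iic, ← filter_mem_eq_inter]
  rw [hbox, hmeet]
  rcases le_total l k with h | h
  · rw [inter_eq_left.2 (Iic_subset_Iic.2 h)]
    exact sum_sum_le_card_of_sum_row_le_one hS hrow _ _
  · rw [inter_eq_right.2 (Iic_subset_Iic.2 h)]
    exact sum_sum_le_card_of_sum_col_le_one hS hcol _ _

lemma Antitone.exists_nonneg_eq_sum_smul_iicIndicator {K : ℕ} {x : Fin K → ℝ}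
    (hx : Antitone x) (hx0 : 0 ≤ x) :
    ∃ d : Fin K → ℝ, 0 ≤ d ∧ x = ∑ k, d k • Fin.iicIndicator k := by
  set x' : ℕ → ℝ := fun n => if h : n < K then x ⟨n, h⟩ else 0
  have hx' : ∀ k : Fin K, x' k = x k := fun k => dif_pos k.isLt
  refine ⟨fun k => x' k - x' (k + 1), fun k => ?_, funext fun j => ?_⟩
  · by_cases h : (k : ℕ) + 1 < K
    · simpa [x', h] using hx (Fin.le_iff_val_le_val.2 (Nat.le_succ k))
    · simpa [x', h] using hx0 k
  · have hIco : (range K).filter (fun n => (j : ℕ) ≤ n) = Ico (j : ℕ) K := by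
      ext n
      simp only [mem_filter, mem_range, mem_Ico]
      omega
    have hK : x' K = 0 := dif_neg (lt_irrefl K)
    simp only [Finset.sum_apply, Pi.smul_apply, smul_eq_mul, Fin.iicIndicator, mul_ite, mul_one,
      mul_zero, Fin.le_iff_val_le_val]
    rw [Fin.sum_univ_eq_sum_range (fun n => if (j : ℕ) ≤ n then x' n - x' (n + 1) else 0),
      ← sum_filter, hIco, ← neg_inj, ← sum_neg_distrib]
    simp_rw [neg_sub]
    rw [sum_Ico_sub x' j.isLt.le, hK, hx']
    ring

theorem dotProduct_mulVec_le_dotProduct_of_antitone {K : ℕ} {x y : Fin K → ℝ}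
    (hx : Antitone x) (hy : Antitone y) (hx0 : 0 ≤ x) (hy0 : 0 ≤ y)
    {S : Matrix (Fin K) (Fin K) ℝ} (hS : ∀ i j, 0 ≤ S i j) (hrow : ∀ i, ∑ j, S i j ≤ 1)
    (hcol : ∀ j, ∑ i, S i j ≤ 1) : y ⬝ᵥ S *ᵥ x ≤ x ⬝ᵥ y := by
  obtain ⟨d, hd, rfl⟩ := hx.exists_nonneg_eq_sum_smul_iicIndicator hx0
  obtain ⟨e, he, rfl⟩ := hy.exists_nonneg_eq_sum_smul_iicIndicator hy0
  simp only [mulVec_sum, mulVec_smul, dotProduct_sum, sum_dotProduct, smul_dotProduct,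
    dotProduct_smul, smul_eq_mul, mul_sum]
  conv_rhs => rw [sum_comm]
  refine sum_le_sum fun k _ => sum_le_sum fun l _ => ?_
  rw [mul_left_comm (e l)]
  exact mul_le_mul_of_nonneg_left (mul_le_mul_of_nonneg_left
    (Fin.iicIndicator_dotProduct_mulVec_le hS hrow hcol l k) (he l)) (hd k)

lemma Matrix.sum_row_comp_le_one_of_mem_doublyStochastic {n m : Type*} [Fintype n]
    [DecidableEq n] [Fintype m] {S : Matrix n n ℝ} (hS : S ∈ doublyStochastic ℝ n)
    {f : m → n} (hf : Function.Injective f) (i : n) : ∑ j, S i (f j) ≤ 1 :=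
  calc ∑ j, S i (f j) = ∑ j ∈ univ.map ⟨f, hf⟩, S i j := (sum_map univ ⟨f, hf⟩ fun j => S i j).symm
    _ ≤ ∑ j, S i j := sum_le_univ_sum_of_nonneg fun _ => nonneg_of_mem_doublyStochastic hS
    _ = 1 := sum_row_of_mem_doublyStochastic hS i

theorem Matrix.dotProduct_submatrix_mulVec_le_of_mem_doublyStochastic {n : Type*} [Fintype n]
    [DecidableEq n] {K : ℕ} {S : Matrix n n ℝ} (hS : S ∈ doublyStochastic ℝ n)
    {f : Fin K → n} (hf : Function.Injective f) {x y : Fin K → ℝ} (hx : Antitone x)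
    (hy : Antitone y) (hx0 : 0 ≤ x) (hy0 : 0 ≤ y) : y ⬝ᵥ S.submatrix f f *ᵥ x ≤ x ⬝ᵥ y :=
  dotProduct_mulVec_le_dotProduct_of_antitone hx hy hx0 hy0
    (fun _ _ => nonneg_of_mem_doublyStochastic hS)
    (fun i => sum_row_comp_le_one_of_mem_doublyStochastic hS hf (f i))
    (fun j => sum_row_comp_le_one_of_mem_doublyStochastic
      (transpose_mem_doublyStochastic_iff.2 hS) hf (f j))

lemma Quaternion.re_sum {ι : Type*} (s : Finset ι) (f : ι → ℍ) :
    (∑ i ∈ s, f i).re = ∑ i ∈ s, (f i).re :=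
  map_sum (QuaternionAlgebra.reₗ _ _ _) f s

lemma Quaternion.re_mul_comm (a b : ℍ) : (a * b).re = (b * a).re := by
  simp only [Quaternion.re_mul]
  ring

lemma Quaternion.re_mul_le (a b : ℍ) : (a * b).re ≤ (normSq a + normSq b) / 2 := by
  have h := real_inner_le_norm a (star b)
  rw [inner_def, star_star, norm_star] at h
  rw [normSq_eq_norm_mul_self, normSq_eq_norm_mul_self]
  nlinarith [two_mul_le_add_sq ‖a‖ ‖b‖]

lemma Matrix.re_trace_mul_comm {m n : Type*} [Fintype m] [Fintype n] (A : Matrix m n ℍ)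
    (B : Matrix n m ℍ) : (A * B).trace.re = (B * A).trace.re := by
  simp only [trace, diag, mul_apply, Quaternion.re_sum]
  rw [sum_comm]
  simp_rw [Quaternion.re_mul_comm]

lemma isUnitary_iff_mem_unitary {n : ℕ} {A : Matrix (Fin n) (Fin n) ℍ} :
    IsUnitary A ↔ A ∈ unitary (Matrix (Fin n) (Fin n) ℍ) := by
  rw [IsUnitary, Unitary.mem_iff, star_eq_conjTranspose, and_comm]

lemma Matrix.map_normSq_mem_doublyStochastic {n : Type*} [Fintype n] [DecidableEq n]
    {A : Matrix n n ℍ} (hA : A ∈ unitary (Matrix n n ℍ)) :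
    A.map Quaternion.normSq ∈ doublyStochastic ℝ n := by
  refine mem_doublyStochastic_iff_sum.2 ⟨fun i j => Quaternion.normSq_nonneg, fun i => ?_, fun j => ?_⟩
  · simpa [mul_apply, Quaternion.self_mul_star, Quaternion.re_sum, Quaternion.re_one] using
      congr_arg (fun C => (C i i).re) (Unitary.mul_star_self_of_mem hA)
  · simpa [mul_apply, Quaternion.star_mul_self, Quaternion.re_sum, Quaternion.re_one] using
      congr_arg (fun C => (C j j).re) (Unitary.star_mul_self_of_mem hA)

lemma conjTranspose_rectDiag (M N : ℕ) {K : ℕ} (σ : Fin K → ℝ) :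
    (rectDiag M N σ)ᴴ = rectDiag N M σ := by
  ext i j : 1
  simp only [conjTranspose_apply, rectDiag, of_apply]
  split_ifs with h₁ h₂ h₂
  · rw [Quaternion.star_coe]
    congr 3
    exact h₁.1
  · exact absurd ⟨h₁.1.symm, h₁.1 ▸ h₁.2⟩ h₂
  · exact absurd ⟨h₂.1.symm, h₂.1 ▸ h₂.2⟩ h₁
  · exact star_zero _

lemma rectDiag_eq_sum_smul_single {M N K : ℕ} (hM : K ≤ M) (hN : K ≤ N) (σ : Fin K → ℝ) :
    rectDiag M N σ = ∑ k, σ k • single (Fin.castLE hM k) (Fin.castLE hN k) 1 := by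
  ext i j : 1
  simp only [rectDiag, of_apply, Matrix.sum_apply, Matrix.smul_apply, single_apply, smul_ite,
    smul_zero]
  split_ifs with h
  · rw [sum_eq_single_of_mem ⟨i, h.2⟩ (mem_univ _)]
    · simp only [Fin.ext_iff, Fin.val_castLE, h.1, and_self, if_true]
      exact Algebra.algebraMap_eq_smul_one (R := ℝ) (A := ℍ) _
    · rintro c - hc
      refine if_neg fun hci => hc (Fin.ext ?_)
      simpa [Fin.ext_iff] using hci.1
  · refine (sum_eq_zero fun c _ => if_neg fun hc => h ?_).symm
    simp only [Fin.ext_iff, Fin.val_castLE] at hc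
    omega

lemma trace_rectDiag_mul_mul_rectDiag_mul {M N K : ℕ} (hM : K ≤ M) (hN : K ≤ N)
    (y x : Fin K → ℝ) (A : Matrix (Fin M) (Fin M) ℍ) (B : Matrix (Fin N) (Fin N) ℍ) :
    (rectDiag N M y * A * rectDiag M N x * B).trace
      = ∑ k, ∑ k', (y k * x k') • (A (Fin.castLE hM k) (Fin.castLE hM k')
          * B (Fin.castLE hN k') (Fin.castLE hN k)) := by
  simp only [rectDiag_eq_sum_smul_single hN hM, rectDiag_eq_sum_smul_single hM hN,
    Matrix.sum_mul, Matrix.mul_sum, Matrix.smul_mul, Matrix.mul_smul, single_mul_mul_single,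
    trace_sum, trace_smul, trace_single_mul, one_mul, mul_one, smul_eq_mul, smul_sum, smul_smul]
  rw [sum_comm]
  simp_rw [mul_comm (x _)]

theorem re_trace_rectDiag_mul_mul_rectDiag_mul_le {M N K : ℕ} (hM : K ≤ M) (hN : K ≤ N)
    {A : Matrix (Fin M) (Fin M) ℍ} {B : Matrix (Fin N) (Fin N) ℍ}
    (hA : A ∈ unitary (Matrix (Fin M) (Fin M) ℍ)) (hB : B ∈ unitary (Matrix (Fin N) (Fin N) ℍ))
    {x y : Fin K → ℝ} (hx : Antitone x) (hy : Antitone y) (hx0 : 0 ≤ x) (hy0 : 0 ≤ y) :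
    (rectDiag N M y * A * rectDiag M N x * B).trace.re ≤ x ⬝ᵥ y := by
  set a := (A.map Quaternion.normSq).submatrix (Fin.castLE hM) (Fin.castLE hM)
  set b := (B.map Quaternion.normSq)ᵀ.submatrix (Fin.castLE hN) (Fin.castLE hN)
  have ha : y ⬝ᵥ a *ᵥ x ≤ x ⬝ᵥ y := dotProduct_submatrix_mulVec_le_of_mem_doublyStochastic
    (map_normSq_mem_doublyStochastic hA) (Fin.castLE_injective hM) hx hy hx0 hy0
  have hb : y ⬝ᵥ b *ᵥ x ≤ x ⬝ᵥ y := dotProduct_submatrix_mulVec_le_of_mem_doublyStochastic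
    (transpose_mem_doublyStochastic_iff.2 (map_normSq_mem_doublyStochastic hB))
    (Fin.castLE_injective hN) hx hy hx0 hy0
  calc (rectDiag N M y * A * rectDiag M N x * B).trace.re
      = ∑ k, ∑ k', y k * x k' * (A (Fin.castLE hM k) (Fin.castLE hM k')
          * B (Fin.castLE hN k') (Fin.castLE hN k)).re := by
        simp only [trace_rectDiag_mul_mul_rectDiag_mul hM hN, Quaternion.re_sum, Quaternion.re_smul,
          smul_eq_mul]
    _ ≤ ∑ k, ∑ k', y k * x k' * ((a k k' + b k k') / 2) := by
        gcongr with k _ k' _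
        · exact mul_nonneg (hy0 k) (hx0 k')
        · exact Quaternion.re_mul_le _ _
    _ = (y ⬝ᵥ a *ᵥ x + y ⬝ᵥ b *ᵥ x) / 2 := by
        simp only [dotProduct, mulVec, mul_sum, ← sum_add_distrib, sum_div]
        exact sum_congr rfl fun k _ => sum_congr rfl fun k' _ => by ring
    _ ≤ x ⬝ᵥ y := by linarith

/-- Quaternionic von Neumann trace inequality:
`Re(tr(Yᴴ * X)) ≤ ∑ᵢ σᵢ(X) σᵢ(Y)`. -/
theorem quaternion_von_neumann_trace_ineq {M N : ℕ}
    (X Y : Matrix (Fin M) (Fin N) ℍ) (x y : Fin (min M N) → ℝ)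
    (hX : HasQSVD X x) (hY : HasQSVD Y y) :
    (Matrix.trace (Yᴴ * X)).re ≤ ∑ i, x i * y i := by
  obtain ⟨U, V, hU, hV, hx, hx0, rfl⟩ := hX
  obtain ⟨P, Q, hP, hQ, hy, hy0, rfl⟩ := hY
  rw [isUnitary_iff_mem_unitary] at hU hV hP hQ
  have hcyc : ((P * rectDiag M N y * Qᴴ)ᴴ * (U * rectDiag M N x * Vᴴ)).trace.re
      = (rectDiag N M y * (Pᴴ * U) * rectDiag M N x * (Vᴴ * Q)).trace.re := by
    simp only [conjTranspose_mul, conjTranspose_conjTranspose, conjTranspose_rectDiag,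
      Matrix.mul_assoc]
    rw [re_trace_mul_comm]
    simp only [Matrix.mul_assoc]
  rw [hcyc]
  exact re_trace_rectDiag_mul_mul_rectDiag_mul_le (min_le_left M N) (min_le_right M N)
    (mul_mem (Unitary.star_mem hP) hU) (mul_mem (Unitary.star_mem hV) hQ) hx hy hx0 hy0
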